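/- arXiv:math/0107098 — 4 statements merged into one kernel-verified Lean document; each statement's English description precedes it below -/
import Mathlib

section
/- Let k be a field and H a finite-dimensional Hopf algebra over k, with antipode S and with S' : H →ₗ[k] H a two-sided linear inverse of S. Let λ : H →ₗ[k] k be a linear functional such that: (a) λ(a*b) = λ(b * S'(S'(a))) for all a, b ∈ H, and (b) the linear map φ : H → Module.Dual k H defined by φ(a)(b) = λ(S(a)*b) is bijective. Then for every a ∈ H one has: φ(a) ∈ C_r if and only if a lies in the center of H. Consequently φ restricts to a linear bijection from the center Z of H onto C_r, and dim_k Z = dim_k C_r. -/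
/-! By the trace property `φ a = λ (· * S⁻¹ a)`, and a right translate `λ (· * c)` of a
nondegenerate `S⁻²`-twisted trace `λ` is again an `S⁻²`-twisted trace exactly when `c` is
central. Since `S` is a bijective anti-automorphism, `S⁻¹ a` is central if and only if `a` is. -/

/-- The space `C_r` of linear functionals `p` on `H` with `p(ab) = p(b S⁻²(a))`,
where `S'` plays the role of the inverse antipode `S⁻¹`. -/
def Cr (k : Type*) [Field k] (H : Type*) [Ring H] [HopfAlgebra k H]
    (S' : H →ₗ[k] H) : Submodule k (Module.Dual k H) where
  carrier := {p | ∀ a b : H, p (a * b) = p (b * S' (S' a))}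
  add_mem' := by intro p q hp hq a b; simp [hp a b, hq a b]
  zero_mem' := by intro a b; simp
  smul_mem' := by intro c p hp a b; simp [hp a b]

theorem Function.Bijective.mem_center_iff_of_map_mul_rev {M N : Type*} [Semigroup M]
    [Semigroup N] {f : M → N} (hf : Function.Bijective f)
    (hmul : ∀ x y, f (x * y) = f y * f x) {x : M} :
    f x ∈ Set.center N ↔ x ∈ Set.center M := by
  simp only [Semigroup.mem_center_iff]
  constructor
  · intro hx y
    apply hf.1
    rw [hmul, hmul, hx]
  · intro hx y
    obtain ⟨y, rfl⟩ := hf.2 y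
    rw [← hmul, ← hmul, hx]

namespace Module.Dual

variable {k A : Type*} [CommRing k] [Ring A] [Algebra k A]

def IsTwistedTrace (p : Module.Dual k A) (ν : A → A) : Prop :=
  ∀ a b, p (a * b) = p (b * ν a)

theorem eq_zero_of_forall_mul_eq_zero [Module.Projective k A]
    (lam : Module.Dual k A) (hsurj : ∀ f : Module.Dual k A, ∃ x, ∀ c, f c = lam (x * c))
    {c : A} (hc : ∀ u, lam (u * c) = 0) : c = 0 := by
  refine (Module.forall_dual_apply_eq_zero_iff k c).1 fun f => ?_
  obtain ⟨x, hx⟩ := hsurj f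
  rw [hx, hc]

theorem IsTwistedTrace.comp_mulRight_iff_mem_center {lam : Module.Dual k A} {ν : A → A}
    (hlam : lam.IsTwistedTrace ν) (hν : Function.Surjective ν)
    (hnd : ∀ c, (∀ u, lam (u * c) = 0) → c = 0) (c : A) :
    IsTwistedTrace (lam ∘ₗ LinearMap.mulRight k c) ν ↔ c ∈ Set.center A := by
  have hrotate : ∀ a b, lam (a * b * c) = lam (b * ν a * c) ↔
      lam (b * (c * ν a)) = lam (b * (ν a * c)) := fun a b => by
    rw [mul_assoc, hlam, mul_assoc, mul_assoc b]
  simp only [IsTwistedTrace, LinearMap.comp_apply, LinearMap.mulRight_apply, hrotate,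
    Semigroup.mem_center_iff]
  constructor
  · intro h y
    obtain ⟨a, rfl⟩ := hν y
    refine (sub_eq_zero.1 (hnd _ fun u => ?_)).symm
    rw [mul_sub, map_sub, h, sub_self]
  · intro h a b
    rw [h]

end Module.Dual

theorem center_image_eq_Cr_general (k : Type*) [Field k] (H : Type*) [Ring H] [HopfAlgebra k H]
    (S' : H →ₗ[k] H)
    (hS'S : ∀ a : H, S' (HopfAlgebra.antipode (R := k) a) = a)
    (hSS' : ∀ a : H, HopfAlgebra.antipode (R := k) (S' a) = a)
    (lam : Module.Dual k H)
    (hlam : ∀ a b : H, lam (a * b) = lam (b * S' (S' a)))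
    (φ : H →ₗ[k] Module.Dual k H)
    (hφ : ∀ a b : H, φ a b = lam (HopfAlgebra.antipode (R := k) a * b))
    (hbij : Function.Bijective φ) :
    (∀ a : H, φ a ∈ Cr k H S' ↔ a ∈ Subalgebra.center k H) ∧
    Module.finrank k (Subalgebra.center k H) = Module.finrank k (Cr k H S') := by
  have hS : Function.Bijective (HopfAlgebra.antipode k (A := H)) :=
    ⟨Function.LeftInverse.injective hS'S, Function.RightInverse.surjective hSS'⟩
  have hS'_surj : Function.Surjective S' := Function.RightInverse.surjective hS'S
  have hφ_eq : ∀ a, φ a = lam ∘ₗ LinearMap.mulRight k (S' a) := fun a =>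
    LinearMap.ext fun b => by rw [hφ, hlam, hS'S]; rfl
  have hnd : ∀ c, (∀ u, lam (u * c) = 0) → c = 0 := fun _ =>
    lam.eq_zero_of_forall_mul_eq_zero fun f =>
      let ⟨a, ha⟩ := hbij.2 f
      ⟨HopfAlgebra.antipode k a, fun c => by rw [← ha, hφ]⟩
  have hmem : ∀ a, φ a ∈ Cr k H S' ↔ a ∈ Subalgebra.center k H := fun a =>
    calc φ a ∈ Cr k H S' ↔ S' a ∈ Set.center H := by
          rw [← (show lam.IsTwistedTrace (S' ∘ S') from hlam).comp_mulRight_iff_mem_center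
            (hS'_surj.comp hS'_surj) hnd, ← hφ_eq]
          rfl
      _ ↔ a ∈ Subalgebra.center k H := by
          rw [← hS.mem_center_iff_of_map_mul_rev HopfAlgebra.antipode_mul_antidistrib, hSS']
          rfl
  refine ⟨hmem, ?_⟩
  have hcomap : Subalgebra.toSubmodule (Subalgebra.center k H) = (Cr k H S').comap φ :=
    Submodule.ext fun a => (hmem a).symm
  calc Module.finrank k (Subalgebra.center k H)
      = Module.finrank k (Subalgebra.toSubmodule (Subalgebra.center k H)) :=
        (Subalgebra.finrank_toSubmodule _).symm
    _ = Module.finrank k ((Subalgebra.toSubmodule (Subalgebra.center k H)).map φ) :=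
        (Submodule.equivMapOfInjective φ hbij.1 _).finrank_eq
    _ = Module.finrank k (Cr k H S') := by
        rw [hcomap, Submodule.map_comap_eq_of_surjective hbij.2]

/-- **Corollary `ZC`**: for a finite-dimensional Hopf algebra `H` with antipode `S`,
inverse antipode `S'`, and a functional `λ` satisfying Radford's trace property
`λ(ab) = λ(b S⁻²(a))` such that `φ(a)(b) = λ(S(a) b)` is bijective, one has
`φ(a) ∈ C_r ↔ a ∈ Z(H)`; consequently `φ` restricts to a bijection of the center
onto `C_r` and `dim Z(H) = dim C_r`. -/
theorem center_image_eq_Cr (k : Type*) [Field k] (H : Type*) [Ring H] [HopfAlgebra k H]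
    [FiniteDimensional k H]
    (S' : H →ₗ[k] H)
    (hS'S : ∀ a : H, S' (HopfAlgebra.antipode (R := k) a) = a)
    (hSS' : ∀ a : H, HopfAlgebra.antipode (R := k) (S' a) = a)
    (lam : Module.Dual k H)
    (hlam : ∀ a b : H, lam (a * b) = lam (b * S' (S' a)))
    (φ : H →ₗ[k] Module.Dual k H)
    (hφ : ∀ a b : H, φ a b = lam (HopfAlgebra.antipode (R := k) a * b))
    (hbij : Function.Bijective φ) :
    (∀ a : H, φ a ∈ Cr k H S' ↔ a ∈ Subalgebra.center k H) ∧
    Module.finrank k (Subalgebra.center k H) = Module.finrank k (Cr k H S') :=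
  center_image_eq_Cr_general k H S' hS'S hSS' lam hlam φ hφ hbij
end

section
/- Let k be a field and H a Hopf algebra over k with antipode S and with S' : H →ₗ[k] H a two-sided linear inverse of S. Suppose g, g' ∈ H satisfy g*g' = 1 = g'*g and S(S(a)) = g' * a * g for all a ∈ H. If μ : H →ₗ[k] k is cocommutative in the sense that μ(a*b) = μ(b*a) for all a, b ∈ H, then the functional p : H →ₗ[k] k defined by p(b) = μ(b*g) satisfies p(a*b) = p(b * S'(S'(a))) for all a, b ∈ H; that is, p ∈ C_r. -/
/-!
Since `S² = Ad(g')`, inverting gives `S'² = Ad(g)`, i.e. `S'(S'(a)) = g a g'`. Then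
`p(b S'(S'(a))) = μ(b g a g' g) = μ(b g a)`, and cocommutativity of `μ` moves `a` to the front.
-/

theorem Function.LeftInverse.apply_apply_eq_mul_mul {M : Type*} [Monoid M] {f f' : M → M}
    (hf : Function.LeftInverse f' f) {g g' : M} (hg'g : g' * g = 1)
    (hf2 : ∀ a, f (f a) = g' * a * g) (a : M) :
    f' (f' a) = g * a * g' := by
  have h : f (f (g * a * g')) = a := by
    rw [hf2, mul_assoc, mul_assoc, mul_assoc, hg'g, mul_one, ← mul_assoc, hg'g, one_mul]
  conv_lhs => rw [← h, hf, hf]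

theorem apply_mul_mul_eq_apply_mul_mul_mul {M N : Type*} [Monoid M] (μ : M → N)
    (hμ : ∀ a b : M, μ (a * b) = μ (b * a)) {g g' : M} (hg'g : g' * g = 1) (a b : M) :
    μ (a * b * g) = μ (b * (g * a * g') * g) := by
  rw [mul_assoc b, mul_assoc (g * a), hg'g, mul_one, mul_assoc a, hμ, mul_assoc]

theorem cocommutative_shift_mem_Cr_general (k : Type*) [Field k] (H : Type*) [Ring H]
    [HopfAlgebra k H]
    (S' : H →ₗ[k] H)
    (hS'S : ∀ a : H, S' (HopfAlgebra.antipode (R := k) a) = a)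
    (g g' : H) (hg'g : g' * g = 1)
    (hS2 : ∀ a : H,
      HopfAlgebra.antipode (R := k) (HopfAlgebra.antipode (R := k) a) = g' * a * g)
    (μ : Module.Dual k H) (hμ : ∀ a b : H, μ (a * b) = μ (b * a)) :
    ∀ a b : H, μ ((a * b) * g) = μ ((b * S' (S' a)) * g) := by
  intro a b
  rw [Function.LeftInverse.apply_apply_eq_mul_mul (f := HopfAlgebra.antipode k) hS'S hg'g hS2]
  exact apply_mul_mul_eq_apply_mul_mul_mul μ hμ hg'g a b

/-- **Remark after Corollary `ZC`**: if `S² = Ad(g')` for a pair of mutually inverse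
elements `g, g'` (in the small quantum group `g = K_{2ρ}`, `g' = K_{-2ρ}`), then for
any cocommutative functional `μ` the functional `p(b) = μ(b g)` lies in `C_r`,
i.e. `p(ab) = p(b S⁻²(a))` where `S'` is the inverse antipode. -/
theorem cocommutative_shift_mem_Cr (k : Type*) [Field k] (H : Type*) [Ring H]
    [HopfAlgebra k H]
    (S' : H →ₗ[k] H)
    (hS'S : ∀ a : H, S' (HopfAlgebra.antipode (R := k) a) = a)
    (hSS' : ∀ a : H, HopfAlgebra.antipode (R := k) (S' a) = a)
    (g g' : H) (hgg' : g * g' = 1) (hg'g : g' * g = 1)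
    (hS2 : ∀ a : H,
      HopfAlgebra.antipode (R := k) (HopfAlgebra.antipode (R := k) a) = g' * a * g)
    (μ : Module.Dual k H) (hμ : ∀ a b : H, μ (a * b) = μ (b * a)) :
    ∀ a b : H, μ ((a * b) * g) = μ ((b * S' (S' a)) * g) :=
  cocommutative_shift_mem_Cr_general k H S' hS'S g g' hg'g hS2 μ hμ
end

section
/- Under the same hypotheses as in the involutivity theorem (H a finite-dimensional Hopf algebra over a field k with antipode S, inverse antipode S', right integral λ on the dual with λ_l := λ∘S satisfying λ_l(x*y) = λ_l(y*S(S(x))), and R, R' mutually inverse quasitriangular elements of H⊗H with (S⊗id)(R) = R'), for every element a of the center of H the Fourier transform F(a) = (φ(a) ⊗ id)(R₂₁ * R₁₂), with φ(a)(b) = λ(S(a)*b), satisfies the identity F(a) = (id ⊗ λ_l)( R' * flip(R') * (1 ⊗ a) ), where flip(R') is the tensor swap of R' (so that flip(R') is the inverse of R₂₁) and (id ⊗ μ)(x⊗y) = μ(y)•x. -/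
open scoped TensorProduct

section Defs

variable (k : Type*) [Field k] (H : Type*) [Ring H] [HopfAlgebra k H]

/-- `(p ⊗ id) : H ⊗ H → H`, `x ⊗ y ↦ p(x) • y`. -/
noncomputable def lapply (p : Module.Dual k H) : H ⊗[k] H →ₗ[k] H :=
  (TensorProduct.lid k H).toLinearMap ∘ₗ TensorProduct.map p LinearMap.id

/-- `(id ⊗ μ) : H ⊗ H → H`, `x ⊗ y ↦ μ(y) • x`. -/
noncomputable def rapply (μ : Module.Dual k H) : H ⊗[k] H →ₗ[k] H :=
  (TensorProduct.rid k H).toLinearMap ∘ₗ TensorProduct.map LinearMap.id μ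

/-- The embedding `x ⊗ y ↦ x ⊗ y ⊗ 1` of `H ⊗ H` into `H ⊗ H ⊗ H`. -/
noncomputable def leg12 : H ⊗[k] H →ₐ[k] H ⊗[k] (H ⊗[k] H) :=
  Algebra.TensorProduct.map (AlgHom.id k H) Algebra.TensorProduct.includeLeft

/-- The embedding `x ⊗ y ↦ x ⊗ 1 ⊗ y`. -/
noncomputable def leg13 : H ⊗[k] H →ₐ[k] H ⊗[k] (H ⊗[k] H) :=
  Algebra.TensorProduct.map (AlgHom.id k H) Algebra.TensorProduct.includeRight

/-- The embedding `x ⊗ y ↦ 1 ⊗ x ⊗ y`. -/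
noncomputable def leg23 : H ⊗[k] H →ₐ[k] H ⊗[k] (H ⊗[k] H) :=
  Algebra.TensorProduct.includeRight

/-- `R` is quasitriangular: `R Δ(x) = Δᵒᵖ(x) R`, `(Δ ⊗ id)(R) = R₁₃ R₂₃`, and
`(id ⊗ Δ)(R) = R₁₃ R₁₂`. -/
def IsQuasitriangular (Rm : H ⊗[k] H) : Prop :=
  (∀ x : H, Rm * Coalgebra.comul (R := k) x =
      (TensorProduct.comm k H H) (Coalgebra.comul (R := k) x) * Rm) ∧
  ((TensorProduct.assoc k H H H).toLinearMap
      ((Coalgebra.comul (R := k)).rTensor H Rm) = leg13 k H Rm * leg23 k H Rm) ∧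
  ((Coalgebra.comul (R := k) (A := H)).lTensor H Rm = leg13 k H Rm * leg12 k H Rm)

end Defs

/-!
Write `R = ∑ xᵢ ⊗ yᵢ`. Since `R' = ∑ xᵢ ⊗ S'(yᵢ)` and `R' = ∑ S(xᵢ) ⊗ yᵢ`, both sides expand
to sums of multiples of `xᵢ yⱼ`, so it suffices to compare coefficients:
`λ(S(a) yᵢ xⱼ) = λ(S(S'(xⱼ) S'(yᵢ) a))` by anti-multiplicativity of `S`, and the twisted-trace
property of `λ_l` moves `S'(xⱼ)` to the other end, where it becomes `S(xⱼ)` and commutes with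
the central `a`.
-/

open HopfAlgebra TensorProduct

section TwistedTrace

variable {k : Type*} [CommSemiring k] {H : Type*} [Semiring H] [HopfAlgebra k H]

theorem apply_antipode_mul_mul_of_mem_center {S' : H → H}
    (hSS' : ∀ a : H, antipode k (S' a) = a) {lam : Module.Dual k H}
    (hlaml : ∀ x y : H, lam (antipode k (x * y)) = lam (antipode k (y * antipode k (antipode k x))))
    {a : H} (ha : a ∈ Subalgebra.center k H) (y u : H) :
    lam (antipode k a * (y * u)) = lam (antipode k (S' y * antipode k u * a)) :=
  calc lam (antipode k a * (y * u))
      = lam (antipode k (S' u * (S' y * a))) := by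
        rw [antipode_mul_antidistrib, antipode_mul_antidistrib, hSS', hSS', mul_assoc]
    _ = lam (antipode k (S' y * a * antipode k u)) := by rw [hlaml, hSS']
    _ = lam (antipode k (S' y * antipode k u * a)) := by
        rw [mul_assoc, ← Subalgebra.mem_center_iff.mp ha, mul_assoc]

end TwistedTrace

section FourierKernel

variable {k : Type*} [Field k] {H : Type*} [Ring H] [HopfAlgebra k H]

@[simp]
theorem lapply_tmul (p : Module.Dual k H) (x y : H) : lapply k H p (x ⊗ₜ y) = p x • y := rfl

@[simp]
theorem rapply_tmul (μ : Module.Dual k H) (x y : H) : rapply k H μ (x ⊗ₜ y) = μ y • x := rfl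

theorem lapply_comm_mul_eq_rapply {S' : H →ₗ[k] H}
    (hSS' : ∀ a : H, antipode k (S' a) = a) {lam : Module.Dual k H}
    (hlaml : ∀ x y : H, lam (antipode k (x * y)) = lam (antipode k (y * antipode k (antipode k x))))
    {a : H} (ha : a ∈ Subalgebra.center k H) (X Y : H ⊗[k] H) :
    lapply k H (lam ∘ₗ LinearMap.mulLeft k (antipode k a)) (TensorProduct.comm k H H X * Y) =
      rapply k H (lam ∘ₗ antipode k)
        (map LinearMap.id S' X * TensorProduct.comm k H H (map (antipode k) LinearMap.id Y) *
          ((1 : H) ⊗ₜ[k] a)) := by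
  induction X with
  | zero => simp
  | add X X' hX hX' => simp only [map_add, add_mul, hX, hX']
  | tmul x y =>
    induction Y with
    | zero => simp
    | add Y Y' hY hY' => simp only [map_add, mul_add, add_mul, hY, hY']
    | tmul u v =>
      simp [Algebra.TensorProduct.tmul_mul_tmul,
        apply_antipode_mul_mul_of_mem_center hSS' hlaml ha]

end FourierKernel

theorem fourier_eq_lyubashenko_majid_general (k : Type*) [Field k] (H : Type*) [Ring H]
    [HopfAlgebra k H]
    (S' : H →ₗ[k] H)
    (hSS' : ∀ a : H, HopfAlgebra.antipode (R := k) (S' a) = a)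
    (lam : Module.Dual k H)
    (hlaml : ∀ x y : H, lam (HopfAlgebra.antipode (R := k) (x * y)) =
      lam (HopfAlgebra.antipode (R := k)
        (y * HopfAlgebra.antipode (R := k) (HopfAlgebra.antipode (R := k) x))))
    (Rm R' : H ⊗[k] H)
    (hSR : TensorProduct.map (HopfAlgebra.antipode (R := k)) LinearMap.id Rm = R')
    (hS'R : TensorProduct.map LinearMap.id S' Rm = R')
    (F : H → H)
    (hF : ∀ a : H, F a =
      lapply k H (lam ∘ₗ LinearMap.mulLeft k (HopfAlgebra.antipode (R := k) a))
        ((TensorProduct.comm k H H) Rm * Rm)) :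
    ∀ a ∈ Subalgebra.center k H,
      F a = rapply k H (lam ∘ₗ HopfAlgebra.antipode (R := k))
        (R' * (TensorProduct.comm k H H) R' * ((1 : H) ⊗ₜ[k] a)) := by
  intro a ha
  rw [hF, lapply_comm_mul_eq_rapply hSS' hlaml ha, hS'R, hSR]

/-- **Theorem `fourier`, proof identity**: on the center, the quantum Fourier
transform `F = 𝔍 ∘ φ` coincides with the Lyubashenko–Majid map
`𝔖₋(a) = (id ⊗ λ_l)(R₁₂⁻¹ R₂₁⁻¹ (1 ⊗ a))`, where `λ_l = λ ∘ S` and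
`R₁₂⁻¹ = R'`, `R₂₁⁻¹ = flip R'`. -/
theorem fourier_eq_lyubashenko_majid (k : Type*) [Field k] (H : Type*) [Ring H]
    [HopfAlgebra k H] [FiniteDimensional k H]
    (S' : H →ₗ[k] H)
    (hS'S : ∀ a : H, S' (HopfAlgebra.antipode (R := k) a) = a)
    (hSS' : ∀ a : H, HopfAlgebra.antipode (R := k) (S' a) = a)
    (lam : Module.Dual k H)
    (hint : ∀ a : H, rapply k H lam (Coalgebra.comul (R := k) a) = lam a • 1)
    (hlaml : ∀ x y : H, lam (HopfAlgebra.antipode (R := k) (x * y)) =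
      lam (HopfAlgebra.antipode (R := k)
        (y * HopfAlgebra.antipode (R := k) (HopfAlgebra.antipode (R := k) x))))
    (Rm R' : H ⊗[k] H) (hRR' : Rm * R' = 1) (hR'R : R' * Rm = 1)
    (hQT : IsQuasitriangular k H Rm)
    (hSR : TensorProduct.map (HopfAlgebra.antipode (R := k)) LinearMap.id Rm = R')
    (hS'R : TensorProduct.map LinearMap.id S' Rm = R')
    (F : H → H)
    (hF : ∀ a : H, F a =
      lapply k H (lam ∘ₗ LinearMap.mulLeft k (HopfAlgebra.antipode (R := k) a))
        ((TensorProduct.comm k H H) Rm * Rm)) :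
    ∀ a ∈ Subalgebra.center k H,
      F a = rapply k H (lam ∘ₗ HopfAlgebra.antipode (R := k))
        (R' * (TensorProduct.comm k H H) R' * ((1 : H) ⊗ₜ[k] a)) :=
  fourier_eq_lyubashenko_majid_general k H S' hSS' lam hlaml Rm R' hSR hS'R F hF
end

section
/- Let l ≥ 5 be an odd integer not divisible by 3. Define two permutations of ZMod l × ZMod l by σ₁(a,b) = (-a-2, a+b+1) and σ₂(a,b) = (a+b+1, -b-2) (the shifted actions of the two simple reflections of the Weyl group of sl₃ on P/lP). Then: (1) σ₁² = 1, σ₂² = 1 and (σ₁ * σ₂)³ = 1 in Equiv.Perm (ZMod l × ZMod l), and the subgroup G generated by σ₁ and σ₂ has order 6 (it is isomorphic to the symmetric group S₃); (2) the action of G on ZMod l × ZMod l has exactly one singleton orbit, namely {(-1,-1)}, exactly l-1 orbits of cardinality 3, and exactly (l-1)(l-2)/6 orbits of cardinality 6; (3) in particular the total number of G-orbits equals 1 + (l-1) + (l-1)(l-2)/6. -/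
/-!
In the shifted coordinates `(a + 1, b + 1)` the two maps are the simple reflections of the Weyl
group of type A₂ acting linearly, so they satisfy `s² = t² = 1` and the braid relation
`sts = tst`. Hence the group they generate consists of the six words `1, s, t, st, ts, sts`; it
has order 6 because `s` and `st` have orders 2 and 3, and it acts faithfully on the three-point
orbit of `(-1, 0)`, which identifies it with `S₃`.

A point `(a, b)` has trivial stabiliser unless it lies on one of the walls `a = -1`, `b = -1`,
`a + b = -2` (this is where 2 and 3 must be invertible mod `l`). An orbit meeting a wall meets
the fixed line `a = -1` of `s` in exactly one point `(-1, c)`; it is the Steinberg orbit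
`{(-1, -1)}` for `c = -1` and has three points otherwise. So there is one singleton orbit and
there are `l - 1` orbits of size 3, and counting points, `l² = 1 + 3 (l - 1) + 6 n₆`.
-/

section Braid

variable {M : Type*} [Group M] {s t : M}

theorem mul_pow_three_of_braid (hs : s * s = 1) (ht : t * t = 1) (hst : s * t * s = t * s * t) :
    (s * t) ^ 3 = 1 := by
  have htt : ∀ x, x * t * t = x := fun x => by rw [mul_assoc, ht, mul_one]
  simp only [pow_three, ← mul_assoc, hst, htt, hs]

end Braid

namespace Subgroup

variable {M : Type*} [Group M] {s t : M}

theorem coe_closure_pair_of_braid (hs : s * s = 1) (ht : t * t = 1) (hst : s * t * s = t * s * t) :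
    (closure {s, t} : Set M) = {1, s, t, s * t, t * s, s * t * s} := by
  have hss : ∀ x, x * s * s = x := fun x => by rw [mul_assoc, hs, mul_one]
  have closed : ∀ x ∈ ({s, t} : Set M), ∀ y ∈ ({1, s, t, s * t, t * s, s * t * s} : Set M),
      x * y ∈ ({1, s, t, s * t, t * s, s * t * s} : Set M) := by
    rintro x (rfl | rfl) y (rfl | rfl | rfl | rfl | rfl | rfl) <;>
      simp [← mul_assoc, hs, ht, hss, ← hst]
  refine Set.Subset.antisymm (fun g hg => ?_) ?_
  · induction hg using closure_induction_left with
    | one => simp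
    | mul_left x hx y _ ih => exact closed x hx y ih
    | inv_mul_cancel x hx y _ ih =>
      obtain rfl | rfl := hx
      · rw [inv_eq_of_mul_eq_one_right hs]; exact closed _ (by simp) y ih
      · rw [inv_eq_of_mul_eq_one_right ht]; exact closed _ (by simp) y ih
  · have hs' : s ∈ closure {s, t} := subset_closure (by simp)
    have ht' : t ∈ closure {s, t} := subset_closure (by simp)
    rintro g (rfl | rfl | rfl | rfl | rfl | rfl)
    exacts [one_mem _, hs', ht', mul_mem hs' ht', mul_mem ht' hs', mul_mem (mul_mem hs' ht') hs']

theorem natCard_closure_pair_eq_six (hs : s * s = 1) (ht : t * t = 1)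
    (hst : s * t * s = t * s * t) (hs₁ : s ≠ 1) (hst₁ : s * t ≠ 1) :
    Nat.card (closure {s, t}) = 6 := by
  classical
  have hcard :
      Nat.card (closure {s, t}) = ({1, s, t, s * t, t * s, s * t * s} : Set M).ncard := by
    rw [← SetLike.coe_sort_coe, Nat.card_coe_set_eq, coe_closure_pair_of_braid hs ht hst]
  have hle : Nat.card (closure {s, t}) ≤ 6 := by
    simpa [hcard] using (Set.ncard_coe_finset {1, s, t, s * t, t * s, s * t * s}).trans_le
      Finset.card_le_six
  have hpos : 0 < Nat.card (closure {s, t}) :=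
    hcard ▸ (Set.ncard_pos (Set.toFinite _)).2 ⟨1, by simp⟩
  have hs' : s ∈ closure {s, t} := subset_closure (by simp)
  have ht' : t ∈ closure {s, t} := subset_closure (by simp)
  have h2 := (closure {s, t}).orderOf_dvd_natCard hs'
  rw [orderOf_eq_prime (by rw [sq, hs]) hs₁] at h2
  have h3 := (closure {s, t}).orderOf_dvd_natCard (mul_mem hs' ht')
  rw [orderOf_eq_prime (mul_pow_three_of_braid hs ht hst) hst₁] at h3
  omega

end Subgroup

namespace MulAction

open Subgroup

variable {M α : Type*} [Group M] [MulAction M α] {s t : M}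

theorem smul_smul_ne_of_smul_eq {x : α} (hsx : s • x = x) (htx : t • x ≠ x) : s • t • x ≠ x :=
  fun h => htx (smul_left_cancel s (h.trans hsx.symm))

theorem orbit_closure_pair_of_braid (hs : s * s = 1) (ht : t * t = 1)
    (hst : s * t * s = t * s * t) (x : α) :
    orbit (closure {s, t}) x = {x, s • x, t • x, s • t • x, t • s • x, s • t • s • x} := by
  ext y
  simp only [mem_orbit_iff, Subtype.exists, Subgroup.mk_smul, ← SetLike.mem_coe,
    coe_closure_pair_of_braid hs ht hst]
  simp [mul_smul, eq_comm]

theorem orbit_closure_pair_of_smul_eq (hs : s * s = 1) (ht : t * t = 1)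
    (hst : s * t * s = t * s * t) {x : α} (hsx : s • x = x) :
    orbit (closure {s, t}) x = {x, t • x, s • t • x} := by
  rw [orbit_closure_pair_of_braid hs ht hst, hsx]
  ext y
  simp only [Set.mem_insert_iff, Set.mem_singleton_iff]
  tauto

theorem natCard_orbit_closure_pair_eq_three (hs : s * s = 1) (ht : t * t = 1)
    (hst : s * t * s = t * s * t) {x : α} (hsx : s • x = x) (htx : t • x ≠ x)
    (hstx : s • t • x ≠ t • x) :
    Nat.card (orbit (closure {s, t}) x) = 3 := by
  rw [orbit_closure_pair_of_smul_eq hs ht hst hsx, Nat.card_coe_set_eq,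
    Set.ncard_insert_of_notMem, Set.ncard_pair hstx.symm]
  simp [htx.symm, (smul_smul_ne_of_smul_eq hsx htx).symm]

theorem natCard_orbit_closure_pair_eq_six (hs : s * s = 1) (ht : t * t = 1)
    (hst : s * t * s = t * s * t) (hG : Nat.card (closure {s, t}) = 6) {x : α}
    (h₁ : s • x ≠ x) (h₂ : t • x ≠ x) (h₃ : s • t • x ≠ x) (h₄ : t • s • x ≠ x)
    (h₅ : s • t • s • x ≠ x) :
    Nat.card (orbit (closure {s, t}) x) = 6 := by
  have hstab : stabilizer (closure {s, t}) x = ⊥ := by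
    refine (Subgroup.eq_bot_iff_forall _).2 fun ⟨g, hg⟩ hgx => Subtype.ext ?_
    rw [mem_stabilizer_iff, Subgroup.mk_smul] at hgx
    rw [← SetLike.mem_coe, coe_closure_pair_of_braid hs ht hst] at hg
    rcases hg with rfl | rfl | rfl | rfl | rfl | rfl
    exacts [rfl, (h₁ hgx).elim, (h₂ hgx).elim, (h₃ <| by rwa [mul_smul] at hgx).elim,
      (h₄ <| by rwa [mul_smul] at hgx).elim, (h₅ <| by rwa [mul_smul, mul_smul] at hgx).elim]
  rw [Nat.card_coe_set_eq, ← index_stabilizer, hstab, index_bot, hG]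

theorem natCard_closure_pair_eq_six_of_smul_eq (hs : s * s = 1) (ht : t * t = 1)
    (hst : s * t * s = t * s * t) {x : α} (hsx : s • x = x) (htx : t • x ≠ x)
    (hstx : s • t • x ≠ t • x) :
    Nat.card (closure {s, t}) = 6 := by
  refine natCard_closure_pair_eq_six hs ht hst (fun h => hstx (by rw [h, one_smul])) fun h => ?_
  exact smul_smul_ne_of_smul_eq hsx htx (by rw [← mul_smul, h, one_smul])

theorem nonempty_closure_pair_mulEquiv_perm_fin_three (hs : s * s = 1) (ht : t * t = 1)
    (hst : s * t * s = t * s * t) {x : α} (hsx : s • x = x) (htx : t • x ≠ x)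
    (hstx : s • t • x ≠ t • x) :
    Nonempty (closure {s, t} ≃* Equiv.Perm (Fin 3)) := by
  set G := closure {s, t}
  have hO := natCard_orbit_closure_pair_eq_three hs ht hst hsx htx hstx
  have : Finite (orbit G x) := Nat.finite_of_card_ne_zero (by rw [hO]; norm_num)
  have hinj : Function.Injective (toPermHom G (orbit G x)) := by
    refine (injective_iff_map_eq_one _).2 fun ⟨g, hg⟩ hg₁ => Subtype.ext ?_
    have hgx : g • x = x := by
      simpa using congrArg Subtype.val (DFunLike.congr_fun hg₁ ⟨x, mem_orbit_self x⟩)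
    have hgtx : g • t • x = t • x := by
      simpa using congrArg Subtype.val
        (DFunLike.congr_fun hg₁ ⟨t • x, mem_orbit x (⟨t, subset_closure (by simp)⟩ : G)⟩)
    have hstx' := smul_smul_ne_of_smul_eq hsx htx
    rw [← SetLike.mem_coe, coe_closure_pair_of_braid hs ht hst] at hg
    rcases hg with rfl | rfl | rfl | rfl | rfl | rfl
    exacts [rfl, (hstx hgtx).elim, (htx hgx).elim, (hstx' <| by rwa [mul_smul] at hgx).elim,
      (htx <| by rwa [mul_smul, hsx] at hgx).elim,
      (hstx' <| by rwa [mul_smul, mul_smul, hsx] at hgx).elim]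
  let φ : G →* Equiv.Perm (Fin 3) :=
    (Finite.equivFinOfCardEq hO).permCongrHom.toMonoidHom.comp (toPermHom G (orbit G x))
  refine ⟨MulEquiv.ofBijective φ
    (((Finite.equivFinOfCardEq hO).permCongrHom.injective.comp hinj).bijective_of_nat_card_le ?_)⟩
  rw [Nat.card_perm, Nat.card_fin, natCard_closure_pair_eq_six_of_smul_eq hs ht hst hsx htx hstx]
  rfl

theorem natCard_eq_sum_natCard_orbit [Finite α] [Fintype (orbitRel.Quotient M α)] :
    Nat.card α = ∑ o : orbitRel.Quotient M α, Nat.card o.orbit := by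
  rw [Nat.card_congr (selfEquivSigmaOrbits' M α), Nat.card_sigma]

end MulAction

theorem eq_neg_one_of_mul_add_one_eq_zero {R : Type*} [Ring R] {u a : R} (hu : IsUnit u)
    (h : u * (a + 1) = 0) : a = -1 :=
  eq_neg_of_add_eq_zero_left (hu.mul_right_eq_zero.1 h)

theorem Fintype.sum_comp_eq_sum_mul_natCard_fiber {ι : Type*} [Fintype ι] (f : ι → ℕ)
    (g : ℕ → ℕ) (S : Finset ℕ) (hS : ∀ i, f i ∈ S) :
    ∑ i, g (f i) = ∑ k ∈ S, g k * Nat.card {i // f i = k} := by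
  classical
  rw [← Finset.sum_fiberwise_of_maps_to (g := f) fun i _ => hS i]
  refine Finset.sum_congr rfl fun k _ => ?_
  rw [Finset.sum_congr rfl fun i hi => by rw [(Finset.mem_filter.1 hi).2], Finset.sum_const,
    smul_eq_mul, mul_comm, Nat.card_eq_fintype_card, Fintype.card_subtype]

namespace DotAction

open Equiv MulAction Subgroup

variable {l : ℕ}

def reflection₁ (l : ℕ) : Perm (ZMod l × ZMod l) :=
  Function.Involutive.toPerm (fun p => (-p.1 - 2, p.1 + p.2 + 1)) fun p => by ext <;> simp; ring

def reflection₂ (l : ℕ) : Perm (ZMod l × ZMod l) :=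
  Function.Involutive.toPerm (fun p => (p.1 + p.2 + 1, -p.2 - 2)) fun p => by ext <;> simp; ring

@[simp]
theorem reflection₁_apply (a b : ZMod l) : reflection₁ l (a, b) = (-a - 2, a + b + 1) := rfl

@[simp]
theorem reflection₂_apply (a b : ZMod l) : reflection₂ l (a, b) = (a + b + 1, -b - 2) := rfl

theorem reflection₁_mul_self : reflection₁ l * reflection₁ l = 1 := by
  ext ⟨a, b⟩ <;> simp; ring

theorem reflection₂_mul_self : reflection₂ l * reflection₂ l = 1 := by
  ext ⟨a, b⟩ <;> simp; ring

theorem reflection_braid :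
    reflection₁ l * reflection₂ l * reflection₁ l =
      reflection₂ l * reflection₁ l * reflection₂ l := by
  ext ⟨a, b⟩ <;> simp <;> ring

abbrev weylGroup (l : ℕ) : Subgroup (Perm (ZMod l × ZMod l)) :=
  closure {reflection₁ l, reflection₂ l}

theorem reflection₁_smul_wall (c : ZMod l) :
    reflection₁ l • ((-1, c) : ZMod l × ZMod l) = (-1, c) := by
  ext <;> norm_num

theorem reflection₂_smul_wall_ne {c : ZMod l} (hc : c ≠ -1) :
    reflection₂ l • ((-1, c) : ZMod l × ZMod l) ≠ (-1, c) := by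
  simp [hc]

theorem reflection₁_smul_reflection₂_smul_wall_ne (h2 : IsUnit (2 : ZMod l)) {c : ZMod l}
    (hc : c ≠ -1) :
    reflection₁ l • reflection₂ l • ((-1, c) : ZMod l × ZMod l) ≠
      reflection₂ l • ((-1, c) : ZMod l × ZMod l) := by
  simp only [Perm.smul_def, reflection₁_apply, reflection₂_apply, ne_eq, Prod.mk.injEq,
    not_and]
  exact fun h _ => hc (eq_neg_one_of_mul_add_one_eq_zero h2 (by linear_combination -h))

theorem nonempty_weylGroup_mulEquiv_perm_fin_three [Fact (1 < l)] (h2 : IsUnit (2 : ZMod l)) :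
    Nonempty (weylGroup l ≃* Perm (Fin 3)) :=
  have h0 : (0 : ZMod l) ≠ -1 := (neg_ne_zero.2 one_ne_zero).symm
  nonempty_closure_pair_mulEquiv_perm_fin_three reflection₁_mul_self reflection₂_mul_self
    reflection_braid (reflection₁_smul_wall 0) (reflection₂_smul_wall_ne h0)
    (reflection₁_smul_reflection₂_smul_wall_ne h2 h0)

theorem natCard_weylGroup [Fact (1 < l)] (h2 : IsUnit (2 : ZMod l)) :
    Nat.card (weylGroup l) = 6 := by
  obtain ⟨e⟩ := nonempty_weylGroup_mulEquiv_perm_fin_three h2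
  rw [Nat.card_congr e.toEquiv, Nat.card_perm, Nat.card_fin]
  rfl

theorem orbit_wall (c : ZMod l) :
    orbit (weylGroup l) ((-1, c) : ZMod l × ZMod l) = {(-1, c), (c, -c - 2), (-c - 2, -1)} := by
  rw [orbit_closure_pair_of_smul_eq reflection₁_mul_self reflection₂_mul_self
    reflection_braid (reflection₁_smul_wall c)]
  simp only [Perm.smul_def, reflection₁_apply, reflection₂_apply]
  ring_nf

theorem orbit_neg_one_neg_one :
    orbit (weylGroup l) ((-1, -1) : ZMod l × ZMod l) = {(-1, -1)} := by
  rw [orbit_wall]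
  norm_num

theorem natCard_orbit_wall (h2 : IsUnit (2 : ZMod l)) {c : ZMod l} (hc : c ≠ -1) :
    Nat.card (orbit (weylGroup l) ((-1, c) : ZMod l × ZMod l)) = 3 :=
  natCard_orbit_closure_pair_eq_three reflection₁_mul_self reflection₂_mul_self
    reflection_braid (reflection₁_smul_wall c) (reflection₂_smul_wall_ne hc)
    (reflection₁_smul_reflection₂_smul_wall_ne h2 hc)

theorem natCard_orbit_eq_six [Fact (1 < l)] (h2 : IsUnit (2 : ZMod l))
    (h3 : IsUnit (3 : ZMod l)) {a b : ZMod l} (ha : a ≠ -1) (hb : b ≠ -1) (hab : a + b ≠ -2) :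
    Nat.card (orbit (weylGroup l) ((a, b) : ZMod l × ZMod l)) = 6 := by
  refine natCard_orbit_closure_pair_eq_six reflection₁_mul_self reflection₂_mul_self
    reflection_braid (natCard_weylGroup h2) ?_ ?_ ?_ ?_ ?_ <;>
    simp only [Perm.smul_def, reflection₁_apply, reflection₂_apply, ne_eq, Prod.mk.injEq,
      not_and]
  · exact fun h _ => ha (eq_neg_one_of_mul_add_one_eq_zero h2 (by linear_combination -h))
  · exact fun _ h => hb (eq_neg_one_of_mul_add_one_eq_zero h2 (by linear_combination -h))
  · exact fun h h' => ha (eq_neg_one_of_mul_add_one_eq_zero h3 (by linear_combination -h + h'))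
  · exact fun h h' => hb (eq_neg_one_of_mul_add_one_eq_zero h3 (by linear_combination h - h'))
  · exact fun h _ => hab (by linear_combination -h)

def wallOrbit (l : ℕ) (c : ZMod l) : orbitRel.Quotient (weylGroup l) (ZMod l × ZMod l) :=
  Quotient.mk'' (-1, c)

theorem wallOrbit_injective : Function.Injective (wallOrbit l) := by
  intro c c' h
  have hc : ((-1, c) : ZMod l × ZMod l) ∈ orbit (weylGroup l) (-1, c') := Quotient.eq''.1 h
  rw [orbit_wall] at hc
  simp only [Set.mem_insert_iff, Set.mem_singleton_iff, Prod.mk.injEq] at hc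
  rcases hc with ⟨-, rfl⟩ | ⟨rfl, rfl⟩ | ⟨h₁, rfl⟩
  · rfl
  · ring
  · linear_combination -h₁

theorem mem_range_wallOrbit_or_natCard_orbit_eq_six [Fact (1 < l)] (h2 : IsUnit (2 : ZMod l))
    (h3 : IsUnit (3 : ZMod l)) (o : orbitRel.Quotient (weylGroup l) (ZMod l × ZMod l)) :
    o ∈ Set.range (wallOrbit l) ∨ Nat.card o.orbit = 6 := by
  induction o using Quotient.inductionOn' with | h p => ?_
  obtain ⟨a, b⟩ := p
  have mem_wall : ∀ c, (a, b) ∈ orbit (weylGroup l) (-1, c) →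
      wallOrbit l c = Quotient.mk'' (a, b) := fun c h => Quotient.eq''.2 (mem_orbit_symm.1 h)
  by_cases ha : a = -1
  · exact .inl ⟨b, by rw [ha]; rfl⟩
  by_cases hb : b = -1
  · exact .inl ⟨-a - 2, mem_wall _ (by rw [orbit_wall, hb]; right; right; ext <;> simp)⟩
  by_cases hab : a + b = -2
  · refine .inl ⟨a, mem_wall _ ?_⟩
    rw [orbit_wall]; right; left
    ext <;> simp; linear_combination hab
  · exact .inr (natCard_orbit_eq_six h2 h3 ha hb hab)

theorem natCard_orbit_wallOrbit (h2 : IsUnit (2 : ZMod l)) (c : ZMod l) :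
    Nat.card (wallOrbit l c).orbit = if c = -1 then 1 else 3 := by
  split_ifs with hc
  · rw [wallOrbit, orbitRel.Quotient.orbit_mk, hc, orbit_neg_one_neg_one, Nat.card_unique]
  · exact natCard_orbit_wall h2 hc

theorem natCard_orbits_eq_of_ne_six [Fact (1 < l)] (h2 : IsUnit (2 : ZMod l))
    (h3 : IsUnit (3 : ZMod l)) {k : ℕ} (hk : k ≠ 6) :
    Nat.card {o : orbitRel.Quotient (weylGroup l) (ZMod l × ZMod l) // Nat.card o.orbit = k} =
      Nat.card {c : ZMod l // (if c = -1 then 1 else 3) = k} := by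
  have hsub : {o | Nat.card o.orbit = k} ⊆ Set.range (wallOrbit l) := fun o ho =>
    (mem_range_wallOrbit_or_natCard_orbit_eq_six h2 h3 o).resolve_right
      fun h6 => hk (ho.symm.trans h6)
  have h := Set.ncard_preimage_of_injective_subset_range wallOrbit_injective hsub
  simp only [Set.preimage_ofPred_eq, natCard_orbit_wallOrbit h2, ← Nat.card_coe_set_eq] at h
  exact h.symm

theorem natCard_orbit_mem [Fact (1 < l)] (h2 : IsUnit (2 : ZMod l)) (h3 : IsUnit (3 : ZMod l))
    (o : orbitRel.Quotient (weylGroup l) (ZMod l × ZMod l)) :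
    Nat.card o.orbit ∈ ({1, 3, 6} : Finset ℕ) := by
  rcases mem_range_wallOrbit_or_natCard_orbit_eq_six h2 h3 o with ⟨c, rfl⟩ | h6
  · rw [natCard_orbit_wallOrbit h2]
    split_ifs <;> simp
  · simp [h6]

theorem natCard_orbits_eq_one [Fact (1 < l)] (h2 : IsUnit (2 : ZMod l))
    (h3 : IsUnit (3 : ZMod l)) :
    Nat.card {o : orbitRel.Quotient (weylGroup l) (ZMod l × ZMod l) // Nat.card o.orbit = 1} =
      1 := by
  rw [natCard_orbits_eq_of_ne_six h2 h3 (by norm_num)]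
  simp

theorem natCard_orbits_eq_three [Fact (1 < l)] (h2 : IsUnit (2 : ZMod l))
    (h3 : IsUnit (3 : ZMod l)) :
    Nat.card {o : orbitRel.Quotient (weylGroup l) (ZMod l × ZMod l) // Nat.card o.orbit = 3} =
      l - 1 := by
  rw [natCard_orbits_eq_of_ne_six h2 h3 (by norm_num)]
  simp

theorem natCard_orbits_eq_six [Fact (1 < l)] (h2 : IsUnit (2 : ZMod l))
    (h3 : IsUnit (3 : ZMod l)) :
    Nat.card {o : orbitRel.Quotient (weylGroup l) (ZMod l × ZMod l) // Nat.card o.orbit = 6} =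
      (l - 1) * (l - 2) / 6 := by
  have := Fintype.ofFinite (orbitRel.Quotient (weylGroup l) (ZMod l × ZMod l))
  have hclass := Fintype.sum_comp_eq_sum_mul_natCard_fiber _ id _ (natCard_orbit_mem h2 h3)
  rw [Finset.sum_insert (by decide), Finset.sum_insert (by decide), Finset.sum_singleton,
    natCard_orbits_eq_one h2 h3, natCard_orbits_eq_three h2 h3] at hclass
  simp only [id] at hclass
  rw [← natCard_eq_sum_natCard_orbit, Nat.card_prod, Nat.card_zmod] at hclass
  obtain ⟨m, rfl⟩ : ∃ m, l = m + 2 := ⟨l - 2, by have := (Fact.out : 1 < l); omega⟩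
  have : (m + 1) * m = 6 * Nat.card {o : orbitRel.Quotient (weylGroup (m + 2))
      (ZMod (m + 2) × ZMod (m + 2)) // Nat.card o.orbit = 6} := by
    rw [show m + 2 - 1 = m + 1 by omega] at hclass
    linarith
  simp [this]

theorem natCard_orbitRel_quotient [Fact (1 < l)] (h2 : IsUnit (2 : ZMod l))
    (h3 : IsUnit (3 : ZMod l)) :
    Nat.card (orbitRel.Quotient (weylGroup l) (ZMod l × ZMod l)) =
      1 + (l - 1) + (l - 1) * (l - 2) / 6 := by
  have := Fintype.ofFinite (orbitRel.Quotient (weylGroup l) (ZMod l × ZMod l))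
  have h := Fintype.sum_comp_eq_sum_mul_natCard_fiber _ 1 _ (natCard_orbit_mem h2 h3)
  rw [Finset.sum_insert (by decide), Finset.sum_insert (by decide), Finset.sum_singleton,
    natCard_orbits_eq_one h2 h3, natCard_orbits_eq_three h2 h3, natCard_orbits_eq_six h2 h3] at h
  simpa [Nat.card_eq_fintype_card, add_assoc] using h

end DotAction

/-- **Section 7.2 (sl₃ blocks)**: for odd `l ≥ 5` with `3 ∤ l`, the shifted simple
reflections `σ₁(a,b) = (-a-2, a+b+1)` and `σ₂(a,b) = (a+b+1, -b-2)` on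
`P/lP = ZMod l × ZMod l` generate a subgroup `G ≅ S₃` of order 6
(`σ₁² = σ₂² = (σ₁σ₂)³ = 1`); the `G`-action has exactly one singleton orbit,
namely `{(-1,-1)}` (the Steinberg weight), exactly `l-1` orbits of cardinality 3
and exactly `(l-1)(l-2)/6` orbits of cardinality 6, so the total number of orbits
is `1 + (l-1) + (l-1)(l-2)/6`. -/
theorem sl3_dot_action_orbits (l : ℕ) (hl : Odd l) (hl5 : 5 ≤ l) (hl3 : ¬ (3 ∣ l))
    (σ₁ σ₂ : Equiv.Perm (ZMod l × ZMod l))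
    (hσ₁ : ∀ a b : ZMod l, σ₁ (a, b) = (-a - 2, a + b + 1))
    (hσ₂ : ∀ a b : ZMod l, σ₂ (a, b) = (a + b + 1, -b - 2)) :
    σ₁ * σ₁ = 1 ∧ σ₂ * σ₂ = 1 ∧ (σ₁ * σ₂) ^ 3 = 1 ∧
    Nat.card (Subgroup.closure {σ₁, σ₂} : Subgroup (Equiv.Perm (ZMod l × ZMod l)))
      = 6 ∧
    Nonempty ((Subgroup.closure {σ₁, σ₂} :
        Subgroup (Equiv.Perm (ZMod l × ZMod l))) ≃* Equiv.Perm (Fin 3)) ∧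
    MulAction.orbit (Subgroup.closure {σ₁, σ₂}) ((-1, -1) : ZMod l × ZMod l) =
      {(-1, -1)} ∧
    Nat.card {o : MulAction.orbitRel.Quotient (Subgroup.closure {σ₁, σ₂})
        (ZMod l × ZMod l) // Nat.card o.orbit = 1} = 1 ∧
    Nat.card {o : MulAction.orbitRel.Quotient (Subgroup.closure {σ₁, σ₂})
        (ZMod l × ZMod l) // Nat.card o.orbit = 3} = l - 1 ∧
    Nat.card {o : MulAction.orbitRel.Quotient (Subgroup.closure {σ₁, σ₂})
        (ZMod l × ZMod l) // Nat.card o.orbit = 6} = (l - 1) * (l - 2) / 6 ∧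
    Nat.card (MulAction.orbitRel.Quotient (Subgroup.closure {σ₁, σ₂})
        (ZMod l × ZMod l)) = 1 + (l - 1) + (l - 1) * (l - 2) / 6 := by
  have : Fact (1 < l) := ⟨by omega⟩
  have h2 : IsUnit (2 : ZMod l) := by
    simpa using ZMod.isUnit_prime_of_not_dvd Nat.prime_two hl.not_two_dvd_nat
  have h3 : IsUnit (3 : ZMod l) := by simpa using ZMod.isUnit_prime_of_not_dvd Nat.prime_three hl3
  obtain rfl : σ₁ = DotAction.reflection₁ l := Equiv.ext fun ⟨a, b⟩ => hσ₁ a b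
  obtain rfl : σ₂ = DotAction.reflection₂ l := Equiv.ext fun ⟨a, b⟩ => hσ₂ a b
  exact ⟨DotAction.reflection₁_mul_self, DotAction.reflection₂_mul_self,
    mul_pow_three_of_braid DotAction.reflection₁_mul_self DotAction.reflection₂_mul_self
      DotAction.reflection_braid,
    DotAction.natCard_weylGroup h2, DotAction.nonempty_weylGroup_mulEquiv_perm_fin_three h2,
    DotAction.orbit_neg_one_neg_one, DotAction.natCard_orbits_eq_one h2 h3,
    DotAction.natCard_orbits_eq_three h2 h3, DotAction.natCard_orbits_eq_six h2 h3,
    DotAction.natCard_orbitRel_quotient h2 h3⟩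
end
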